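/- Suppose the feature functions are minimal in the sense that the only vector V ∈ ℝ^m for which x ↦ ⟨V, φ(x)⟩ is Lebesgue-almost-everywhere constant on ℝ^d is V = 0. Then for every λ ∈ ℝ^m with Z(λ) finite, the covariance matrix Cov_{p_λ}(φ) is positive definite; consequently the Hessian ∇²Z(λ) = Cov_{p_λ}(φ) is positive definite everywhere and Z is strictly convex on its domain. -/

import Mathlib

open MeasureTheory Real Matrix

noncomputable section

def partZ {d m : ℕ} (φ : (Fin d → ℝ) → Fin m → ℝ) (l : Fin m → ℝ) : ℝ :=
  Real.log (∫ x : Fin d → ℝ, Real.exp (∑ k, l k * φ x k))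

def maxEntDensity {d m : ℕ} (φ : (Fin d → ℝ) → Fin m → ℝ) (l : Fin m → ℝ)
    (x : Fin d → ℝ) : ℝ :=
  Real.exp ((∑ k, l k * φ x k) - partZ φ l)

def featMean {d m : ℕ} (φ : (Fin d → ℝ) → Fin m → ℝ) (l : Fin m → ℝ) (k : Fin m) : ℝ :=
  ∫ x : Fin d → ℝ, φ x k * maxEntDensity φ l x

def featCovMat {d m : ℕ} (φ : (Fin d → ℝ) → Fin m → ℝ) (l : Fin m → ℝ) :
    Matrix (Fin m) (Fin m) ℝ :=
  Matrix.of fun k r =>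
    (∫ x : Fin d → ℝ, φ x k * φ x r * maxEntDensity φ l x) - featMean φ l k * featMean φ l r

def ZFinite {d m : ℕ} (φ : (Fin d → ℝ) → Fin m → ℝ) (l : Fin m → ℝ) : Prop :=
  Integrable (fun x : Fin d → ℝ => Real.exp (∑ k, l k * φ x k)) ∧
  0 < ∫ x : Fin d → ℝ, Real.exp (∑ k, l k * φ x k)

/-!
The quadratic form of `Cov_{p_λ}(φ)` at `V` is the `p_λ`-variance of `⟨V, φ⟩`; since `p_λ > 0`
everywhere it vanishes only if `⟨V, φ⟩` is a.e. constant, i.e. only for `V = 0`.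

For strict convexity, `exp ⟨a λ₁ + b λ₂, φ⟩ = exp (a Z(λ₁) + b Z(λ₂)) · p_{λ₁}^a p_{λ₂}^b`, so
`Z(a λ₁ + b λ₂) - a Z(λ₁) - b Z(λ₂) = log ∫ p_{λ₁}^a p_{λ₂}^b`. Pointwise weighted AM-GM bounds
the integral by `∫ (a p_{λ₁} + b p_{λ₂}) = 1`, with equality only if `p_{λ₁} = p_{λ₂}` a.e.,
which by minimality forces `λ₁ = λ₂`.
-/

open Filter

section WeightedIntegrals

variable {α : Type*} [MeasurableSpace α] {μ : Measure α}

theorem MeasureTheory.Integrable.rpow_mul_rpow {f g : α → ℝ} (hf : Integrable f μ)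
    (hg : Integrable g μ) (hf0 : ∀ x, 0 ≤ f x) (hg0 : ∀ x, 0 ≤ g x) {a b : ℝ} (ha : 0 ≤ a)
    (hb : 0 ≤ b) (hab : a + b = 1) :
    Integrable (fun x => f x ^ a * g x ^ b) μ := by
  refine ((hf.const_mul a).add (hg.const_mul b)).mono'
    ((hf.aemeasurable.pow_const a).mul (hg.aemeasurable.pow_const b)).aestronglyMeasurable
    (Eventually.of_forall fun x => ?_)
  rw [norm_of_nonneg (mul_nonneg (rpow_nonneg (hf0 x) a) (rpow_nonneg (hg0 x) b))]
  exact geom_mean_le_arith_mean2_weighted ha hb (hf0 x) (hg0 x) hab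

theorem integral_rpow_mul_rpow_lt_one {f g : α → ℝ} (hf : Integrable f μ) (hg : Integrable g μ)
    (hf0 : ∀ x, 0 ≤ f x) (hg0 : ∀ x, 0 ≤ g x) (hf1 : ∫ x, f x ∂μ = 1) (hg1 : ∫ x, g x ∂μ = 1)
    {a b : ℝ} (ha : 0 < a) (hb : 0 < b) (hab : a + b = 1) (hfg : ¬ f =ᵐ[μ] g) :
    ∫ x, f x ^ a * g x ^ b ∂μ < 1 := by
  have hamgm (x : α) : f x ^ a * g x ^ b ≤ a * f x + b * g x :=
    geom_mean_le_arith_mean2_weighted ha.le hb.le (hf0 x) (hg0 x) hab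
  have hgeom := hf.rpow_mul_rpow hg hf0 hg0 ha.le hb.le hab
  have harith := (hf.const_mul a).add (hg.const_mul b)
  have harith1 : ∫ x, a * f x + b * g x ∂μ = 1 := by
    rw [integral_add (hf.const_mul a) (hg.const_mul b), integral_const_mul, integral_const_mul,
      hf1, hg1, mul_one, mul_one, hab]
  refine harith1 ▸ (integral_mono hgeom harith hamgm).lt_of_ne fun heq => hfg ?_
  filter_upwards [(integral_eq_iff_of_ae_le hgeom harith (Eventually.of_forall hamgm)).1 heq]
    with x hx
  exact (geom_mean_eq_arith_mean2_weighted_iff_of_pos ha hb (hf0 x) (hg0 x) hab).1 hx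

variable {p g : α → ℝ}

theorem integrable_sub_sq_mul (hp : Integrable p μ) (hgp : Integrable (fun x => g x * p x) μ)
    (hggp : Integrable (fun x => g x * g x * p x) μ) (c : ℝ) :
    Integrable (fun x => (g x - c) ^ 2 * p x) μ := by
  have hexpand : (fun x => (g x - c) ^ 2 * p x)
      = fun x => g x * g x * p x - 2 * c * (g x * p x) + c ^ 2 * p x := by
    ext x; ring
  rw [hexpand]
  exact (hggp.sub (hgp.const_mul _)).add (hp.const_mul _)

theorem integral_sub_integral_mul_sq_mul (hp : Integrable p μ) (hp1 : ∫ x, p x ∂μ = 1)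
    (hgp : Integrable (fun x => g x * p x) μ) (hggp : Integrable (fun x => g x * g x * p x) μ) :
    ∫ x, (g x - ∫ y, g y * p y ∂μ) ^ 2 * p x ∂μ
      = ∫ x, g x * g x * p x ∂μ - (∫ x, g x * p x ∂μ) ^ 2 := by
  set M := ∫ y, g y * p y ∂μ
  have hexpand : (fun x => (g x - M) ^ 2 * p x)
      = fun x => g x * g x * p x - 2 * M * (g x * p x) + M ^ 2 * p x := by
    ext x; ring
  rw [hexpand, integral_add ?_ (hp.const_mul _), integral_sub hggp (hgp.const_mul _),
    integral_const_mul, integral_const_mul, hp1]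
  · ring
  · exact hggp.sub (hgp.const_mul _)

theorem integral_sub_sq_mul_pos (hp : ∀ x, 0 < p x) {c : ℝ}
    (hint : Integrable (fun x => (g x - c) ^ 2 * p x) μ) (hgc : ¬ ∀ᵐ x ∂μ, g x = c) :
    0 < ∫ x, (g x - c) ^ 2 * p x ∂μ := by
  rw [integral_pos_iff_support_of_nonneg (fun x => mul_nonneg (sq_nonneg _) (hp x).le) hint]
  have hsupp : Function.support (fun x => (g x - c) ^ 2 * p x) = {x | g x ≠ c} := by
    ext x
    simp [sub_eq_zero, (hp x).ne']
  rw [hsupp, pos_iff_ne_zero]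
  exact fun h0 => hgc (ae_iff.2 h0)

end WeightedIntegrals

section MaxEnt

variable {d m : ℕ} {φ : (Fin d → ℝ) → Fin m → ℝ} {l : Fin m → ℝ}

def MinimalFeatures (φ : (Fin d → ℝ) → Fin m → ℝ) : Prop :=
  ∀ V : Fin m → ℝ, (∃ a : ℝ, ∀ᵐ x, V ⬝ᵥ φ x = a) → V = 0

theorem maxEntDensity_pos (x : Fin d → ℝ) : 0 < maxEntDensity φ l x := exp_pos _

theorem maxEntDensity_eq_exp_div (hZ : ZFinite φ l) (x : Fin d → ℝ) :
    maxEntDensity φ l x = exp (l ⬝ᵥ φ x) / ∫ y, exp (l ⬝ᵥ φ y) := by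
  rw [maxEntDensity, exp_sub, partZ, exp_log hZ.2]
  rfl

theorem integrable_maxEntDensity (hZ : ZFinite φ l) : Integrable (maxEntDensity φ l) := by
  rw [funext (maxEntDensity_eq_exp_div hZ)]
  exact hZ.1.div_const _

theorem integral_maxEntDensity (hZ : ZFinite φ l) : ∫ x, maxEntDensity φ l x = 1 := by
  simp_rw [maxEntDensity_eq_exp_div hZ]
  rw [integral_div]
  exact div_self hZ.2.ne'

theorem featCovMat_isHermitian : (featCovMat φ l).IsHermitian := by
  ext k r
  simp only [featCovMat, conjTranspose_apply, of_apply, star_trivial, mul_comm (φ _ r),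
    mul_comm (featMean φ l r)]

theorem dotProduct_mul_maxEntDensity_eq_sum (V : Fin m → ℝ) :
    (fun x => V ⬝ᵥ φ x * maxEntDensity φ l x)
      = fun x => ∑ k, V k * (φ x k * maxEntDensity φ l x) := by
  ext x
  simp only [dotProduct, Finset.sum_mul, mul_assoc]

theorem dotProduct_mul_dotProduct_mul_maxEntDensity_eq_sum (V : Fin m → ℝ) :
    (fun x => V ⬝ᵥ φ x * V ⬝ᵥ φ x * maxEntDensity φ l x)
      = fun x => ∑ k, ∑ r, V k * V r * (φ x k * φ x r * maxEntDensity φ l x) := by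
  ext x
  simp only [dotProduct, Finset.sum_mul, Finset.mul_sum]
  exact Finset.sum_congr rfl fun k _ => Finset.sum_congr rfl fun r _ => by ring

theorem integrable_dotProduct_mul_maxEntDensity
    (h1 : ∀ k, Integrable fun x => φ x k * maxEntDensity φ l x) (V : Fin m → ℝ) :
    Integrable fun x => V ⬝ᵥ φ x * maxEntDensity φ l x := by
  rw [dotProduct_mul_maxEntDensity_eq_sum]
  exact integrable_finsetSum _ fun k _ => (h1 k).const_mul _

theorem integral_dotProduct_mul_maxEntDensity
    (h1 : ∀ k, Integrable fun x => φ x k * maxEntDensity φ l x) (V : Fin m → ℝ) :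
    ∫ x, V ⬝ᵥ φ x * maxEntDensity φ l x = V ⬝ᵥ featMean φ l := by
  rw [dotProduct_mul_maxEntDensity_eq_sum, integral_finsetSum _ fun k _ => (h1 k).const_mul _]
  simp only [integral_const_mul, featMean, dotProduct]

theorem integrable_dotProduct_mul_dotProduct_mul_maxEntDensity
    (h2 : ∀ k r, Integrable fun x => φ x k * φ x r * maxEntDensity φ l x) (V : Fin m → ℝ) :
    Integrable fun x => V ⬝ᵥ φ x * V ⬝ᵥ φ x * maxEntDensity φ l x := by
  rw [dotProduct_mul_dotProduct_mul_maxEntDensity_eq_sum]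
  exact integrable_finsetSum _ fun k _ => integrable_finsetSum _ fun r _ =>
    (h2 k r).const_mul _

theorem integral_dotProduct_mul_dotProduct_mul_maxEntDensity
    (h2 : ∀ k r, Integrable fun x => φ x k * φ x r * maxEntDensity φ l x) (V : Fin m → ℝ) :
    ∫ x, V ⬝ᵥ φ x * V ⬝ᵥ φ x * maxEntDensity φ l x
      = ∑ k, ∑ r, V k * V r * ∫ x, φ x k * φ x r * maxEntDensity φ l x := by
  rw [dotProduct_mul_dotProduct_mul_maxEntDensity_eq_sum, integral_finsetSum _ fun k _ =>
    integrable_finsetSum _ fun r _ => (h2 k r).const_mul _]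
  refine Finset.sum_congr rfl fun k _ => ?_
  rw [integral_finsetSum _ fun r _ => (h2 k r).const_mul _]
  simp only [integral_const_mul]

theorem dotProduct_featCovMat_mulVec (hZ : ZFinite φ l)
    (h1 : ∀ k, Integrable fun x => φ x k * maxEntDensity φ l x)
    (h2 : ∀ k r, Integrable fun x => φ x k * φ x r * maxEntDensity φ l x) (V : Fin m → ℝ) :
    V ⬝ᵥ featCovMat φ l *ᵥ V
      = ∫ x, (V ⬝ᵥ φ x - ∫ y, V ⬝ᵥ φ y * maxEntDensity φ l y) ^ 2 * maxEntDensity φ l x := by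
  rw [integral_sub_integral_mul_sq_mul (integrable_maxEntDensity hZ) (integral_maxEntDensity hZ)
      (integrable_dotProduct_mul_maxEntDensity h1 V)
      (integrable_dotProduct_mul_dotProduct_mul_maxEntDensity h2 V),
    integral_dotProduct_mul_maxEntDensity h1,
    integral_dotProduct_mul_dotProduct_mul_maxEntDensity h2]
  simp only [featCovMat, dotProduct, mulVec, of_apply, sq, Finset.mul_sum, Finset.sum_mul,
    ← Finset.sum_sub_distrib]
  exact Finset.sum_congr rfl fun k _ => Finset.sum_congr rfl fun r _ => by ring

theorem featCovMat_posDef (hmin : MinimalFeatures φ) (hZ : ZFinite φ l)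
    (h1 : ∀ k, Integrable fun x => φ x k * maxEntDensity φ l x)
    (h2 : ∀ k r, Integrable fun x => φ x k * φ x r * maxEntDensity φ l x) :
    (featCovMat φ l).PosDef := by
  refine .of_dotProduct_mulVec_pos featCovMat_isHermitian fun V hV => ?_
  rw [star_trivial, dotProduct_featCovMat_mulVec hZ h1 h2]
  exact integral_sub_sq_mul_pos maxEntDensity_pos
    (integrable_sub_sq_mul (integrable_maxEntDensity hZ)
      (integrable_dotProduct_mul_maxEntDensity h1 V)
      (integrable_dotProduct_mul_dotProduct_mul_maxEntDensity h2 V) _)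
    fun hconst => hV (hmin V ⟨_, hconst⟩)

theorem eq_of_maxEntDensity_ae_eq (hmin : MinimalFeatures φ) {l₁ l₂ : Fin m → ℝ}
    (h : maxEntDensity φ l₁ =ᵐ[volume] maxEntDensity φ l₂) : l₁ = l₂ := by
  refine sub_eq_zero.1 (hmin _ ⟨partZ φ l₁ - partZ φ l₂, ?_⟩)
  filter_upwards [h] with x hx
  rw [sub_dotProduct]
  have := exp_injective hx
  change l₁ ⬝ᵥ φ x - partZ φ l₁ = l₂ ⬝ᵥ φ x - partZ φ l₂ at this
  linarith

theorem exp_dotProduct_add_smul (l₁ l₂ : Fin m → ℝ) (a b : ℝ) (x : Fin d → ℝ) :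
    exp ((a • l₁ + b • l₂) ⬝ᵥ φ x)
      = exp (a * partZ φ l₁ + b * partZ φ l₂)
        * (maxEntDensity φ l₁ x ^ a * maxEntDensity φ l₂ x ^ b) := by
  simp only [maxEntDensity, ← exp_mul, ← exp_add, add_dotProduct, smul_dotProduct, smul_eq_mul]
  congr 1
  change _ = _ + ((l₁ ⬝ᵥ φ x - _) * a + (l₂ ⬝ᵥ φ x - _) * b)
  ring

theorem convex_setOf_zFinite : Convex ℝ {l : Fin m → ℝ | ZFinite φ l} := by
  intro l₁ h₁ l₂ h₂ a b ha hb hab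
  have hint : Integrable fun x => exp ((a • l₁ + b • l₂) ⬝ᵥ φ x) := by
    simp_rw [exp_dotProduct_add_smul l₁ l₂ a b]
    exact ((integrable_maxEntDensity h₁).rpow_mul_rpow (integrable_maxEntDensity h₂)
      (fun x => (maxEntDensity_pos x).le) (fun x => (maxEntDensity_pos x).le) ha hb hab).const_mul _
  exact ⟨hint, integral_exp_pos hint⟩

theorem strictConvexOn_partZ (hmin : MinimalFeatures φ) :
    StrictConvexOn ℝ {l : Fin m → ℝ | ZFinite φ l} (partZ φ) := by
  refine ⟨convex_setOf_zFinite, fun l₁ h₁ l₂ h₂ hne a b ha hb hab => ?_⟩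
  set c := a * partZ φ l₁ + b * partZ φ l₂
  set I := ∫ x, maxEntDensity φ l₁ x ^ a * maxEntDensity φ l₂ x ^ b
  have hsplit : ∫ x, exp ((a • l₁ + b • l₂) ⬝ᵥ φ x) = exp c * I := by
    simp_rw [exp_dotProduct_add_smul l₁ l₂ a b]
    exact integral_const_mul _ _
  have hIpos : 0 < I := by
    refine pos_of_mul_pos_right ?_ (exp_pos c).le
    rw [← hsplit]
    exact (convex_setOf_zFinite h₁ h₂ ha.le hb.le hab).2
  have hIlt : I < 1 :=
    integral_rpow_mul_rpow_lt_one (integrable_maxEntDensity h₁) (integrable_maxEntDensity h₂)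
      (fun x => (maxEntDensity_pos x).le) (fun x => (maxEntDensity_pos x).le)
      (integral_maxEntDensity h₁) (integral_maxEntDensity h₂) ha hb hab
      fun h => hne (eq_of_maxEntDensity_ae_eq hmin h)
  calc partZ φ (a • l₁ + b • l₂) = log (exp c * I) := by rw [← hsplit]; rfl
    _ = c + log I := by rw [log_mul (exp_pos c).ne' hIpos.ne', log_exp]
    _ < c := by linarith [log_neg hIpos hIlt]

end MaxEnt

theorem minimal_features_posdef_strictconvex_general {d m : ℕ}
    (φ : (Fin d → ℝ) → Fin m → ℝ)
    (hL2 : ∀ l : Fin m → ℝ, ZFinite φ l → ∀ k r,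
      Integrable (fun x : Fin d → ℝ => φ x k * φ x r * maxEntDensity φ l x) ∧
      Integrable (fun x : Fin d → ℝ => φ x k * maxEntDensity φ l x))
    (hmin : ∀ V : Fin m → ℝ,
      (∃ a : ℝ, ∀ᵐ x : Fin d → ℝ, (∑ k, V k * φ x k) = a) → V = 0) :
    (∀ l : Fin m → ℝ, ZFinite φ l → Matrix.PosDef (featCovMat φ l)) ∧
    StrictConvexOn ℝ {l : Fin m → ℝ | ZFinite φ l} (partZ φ) :=
  ⟨fun l hZ => featCovMat_posDef hmin hZ (fun k => (hL2 l hZ k k).2) fun k r => (hL2 l hZ k r).1,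
    strictConvexOn_partZ hmin⟩

/-- If the features are minimal (no nonzero linear combination of the `φ_k` is a.e. constant),
then `Cov_{p_λ}(φ)` is positive definite for every `λ` with `Z(λ)` finite, and `Z` is strictly
convex on its domain. -/
theorem minimal_features_posdef_strictconvex {d m : ℕ}
    (φ : (Fin d → ℝ) → Fin m → ℝ) (hφ : Measurable φ)
    (hL2 : ∀ l : Fin m → ℝ, ZFinite φ l → ∀ k r,
      Integrable (fun x : Fin d → ℝ => φ x k * φ x r * maxEntDensity φ l x) ∧
      Integrable (fun x : Fin d → ℝ => φ x k * maxEntDensity φ l x))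
    (hmin : ∀ V : Fin m → ℝ,
      (∃ a : ℝ, ∀ᵐ x : Fin d → ℝ, (∑ k, V k * φ x k) = a) → V = 0) :
    (∀ l : Fin m → ℝ, ZFinite φ l → Matrix.PosDef (featCovMat φ l)) ∧
    StrictConvexOn ℝ {l : Fin m → ℝ | ZFinite φ l} (partZ φ) :=
  minimal_features_posdef_strictconvex_general φ hL2 hmin

end
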